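/- Every m-isometry on ℝⁿ (m odd, finite dimensional) preserves n-dimensional volume, i.e., has determinant ±1. -/

import Mathlib

open scoped BigOperators

/-- `T` is an `m`-isometry on a real Hilbert space. -/
def IsMIsometryR {H : Type*} [NormedAddCommGroup H] [InnerProductSpace ℝ H]
    (m : ℕ) (T : H →L[ℝ] H) : Prop :=
  ∀ x : H, ∑ k ∈ Finset.range (m + 1),
    (-1 : ℝ) ^ (m - k) * (m.choose k) * ‖(T ^ k) x‖ ^ 2 = 0

/-!
If `μ` is a complex eigenvalue of `T` with eigenvector `x + iy` (`x`, `y` real, not both zero),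
then `‖Tᵏx‖² + ‖Tᵏy‖² = |μ|^(2k) (‖x‖² + ‖y‖²)`. Adding the `m`-isometry identities for `x` and
`y` therefore gives `(|μ|² - 1)ᵐ (‖x‖² + ‖y‖²) = 0`, so `|μ| = 1`, and `|det T| = 1` because the
determinant is the product of the complex eigenvalues.
-/

open Finset
open scoped Matrix

theorem sum_range_neg_one_pow_mul_choose_mul_pow {R : Type*} [CommRing R] (m : ℕ) (r : R) :
    ∑ k ∈ range (m + 1), (-1 : R) ^ (m - k) * m.choose k * r ^ k = (r - 1) ^ m := by
  rw [sub_eq_add_neg, add_pow]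
  exact sum_congr rfl fun k _ => by ring

theorem Matrix.exists_mulVec_eq_rotation_of_isRoot_charpoly {ι : Type*} [Fintype ι]
    [DecidableEq ι] (M : Matrix ι ι ℝ) {μ : ℂ}
    (hμ : (M.map (algebraMap ℝ ℂ)).charpoly.IsRoot μ) :
    ∃ x y : ι → ℝ, (x ≠ 0 ∨ y ≠ 0) ∧
      M *ᵥ x = μ.re • x - μ.im • y ∧ M *ᵥ y = μ.im • x + μ.re • y := by
  rw [← Matrix.charpoly_toLin', ← Module.End.hasEigenvalue_iff_isRoot_charpoly] at hμ
  obtain ⟨v, hv⟩ := hμ.exists_hasEigenvector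
  have hMv := hv.apply_eq_smul
  refine ⟨fun i => (v i).re, fun i => (v i).im, ?_, ?_, ?_⟩
  · by_contra! h
    exact hv.2 (funext fun i => Complex.ext (congrFun h.1 i) (congrFun h.2 i))
  · funext i
    have := congrArg Complex.re (congrFun hMv i)
    simpa [Matrix.mulVec, dotProduct, Complex.re_sum] using this
  · funext i
    have := congrArg Complex.im (congrFun hMv i)
    simpa [Matrix.mulVec, dotProduct, Complex.im_sum, add_comm] using this

theorem Matrix.det_eq_one_or_eq_neg_one_of_normSq_eq_one {ι : Type*} [Fintype ι]
    [DecidableEq ι] (M : Matrix ι ι ℝ)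
    (h : ∀ μ ∈ (M.map (algebraMap ℝ ℂ)).charpoly.roots, Complex.normSq μ = 1) :
    M.det = 1 ∨ M.det = -1 := by
  have hdet : Complex.normSq (algebraMap ℝ ℂ M.det) = 1 := by
    rw [RingHom.map_det, RingHom.mapMatrix_apply, det_eq_prod_roots_charpoly, map_multiset_prod]
    exact Multiset.prod_eq_one fun r hr => by
      obtain ⟨μ, hμ, rfl⟩ := Multiset.mem_map.mp hr
      exact h μ hμ
  rw [Complex.coe_algebraMap, Complex.normSq_ofReal] at hdet
  exact mul_self_eq_one_iff.mp hdet

section InnerProductSpace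

variable {H : Type*} [NormedAddCommGroup H] [InnerProductSpace ℝ H]

theorem norm_smul_sub_smul_sq_add_norm_smul_add_smul_sq (a b : ℝ) (u v : H) :
    ‖a • u - b • v‖ ^ 2 + ‖b • u + a • v‖ ^ 2 = (a ^ 2 + b ^ 2) * (‖u‖ ^ 2 + ‖v‖ ^ 2) := by
  rw [norm_sub_sq_real, norm_add_sq_real]
  simp only [norm_smul, inner_smul_left, inner_smul_right, mul_pow,
    Real.norm_eq_abs, sq_abs, conj_trivial]
  ring

theorem ContinuousLinearMap.norm_pow_apply_sq_add_norm_pow_apply_sq {T : H →L[ℝ] H}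
    {x y : H} {a b : ℝ} (hx : T x = a • x - b • y) (hy : T y = b • x + a • y) (k : ℕ) :
    ‖(T ^ k) x‖ ^ 2 + ‖(T ^ k) y‖ ^ 2 = (a ^ 2 + b ^ 2) ^ k * (‖x‖ ^ 2 + ‖y‖ ^ 2) := by
  induction k with
  | zero => simp
  | succ k ih =>
    rw [pow_succ T k, mul_apply_eq_comp, mul_apply_eq_comp, hx, hy, map_sub, map_add,
      map_smul, map_smul, map_smul, map_smul, norm_smul_sub_smul_sq_add_norm_smul_add_smul_sq, ih]
    ring

theorem IsMIsometryR.sq_add_sq_eq_one {m : ℕ} {T : H →L[ℝ] H} (hT : IsMIsometryR m T)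
    {x y : H} (hxy : x ≠ 0 ∨ y ≠ 0) {a b : ℝ} (hx : T x = a • x - b • y)
    (hy : T y = b • x + a • y) : a ^ 2 + b ^ 2 = 1 := by
  have hpos : 0 < ‖x‖ ^ 2 + ‖y‖ ^ 2 := by
    rcases hxy with h | h <;> have := norm_pos_iff.mpr h <;> positivity
  have key : (a ^ 2 + b ^ 2 - 1) ^ m * (‖x‖ ^ 2 + ‖y‖ ^ 2) = 0 := by
    calc (a ^ 2 + b ^ 2 - 1) ^ m * (‖x‖ ^ 2 + ‖y‖ ^ 2)
        = ∑ k ∈ range (m + 1),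
            (-1 : ℝ) ^ (m - k) * m.choose k * (‖(T ^ k) x‖ ^ 2 + ‖(T ^ k) y‖ ^ 2) := by
          simp only [T.norm_pow_apply_sq_add_norm_pow_apply_sq hx hy,
            ← sum_range_neg_one_pow_mul_choose_mul_pow, sum_mul, mul_assoc]
      _ = 0 := by simp only [mul_add, sum_add_distrib, hT x, hT y, add_zero]
  have := eq_zero_of_pow_eq_zero ((mul_eq_zero.mp key).resolve_right hpos.ne')
  linarith

end InnerProductSpace

theorem IsMIsometryR.det_eq_one_or_eq_neg_one {H : Type*} [NormedAddCommGroup H]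
    [InnerProductSpace ℝ H] [FiniteDimensional ℝ H] {m : ℕ} {T : H →L[ℝ] H}
    (hT : IsMIsometryR m T) :
    LinearMap.det (T : H →ₗ[ℝ] H) = 1 ∨ LinearMap.det (T : H →ₗ[ℝ] H) = -1 := by
  let b := Module.finBasis ℝ H
  have hT_coord (z) :
      T (b.equivFun.symm z) = b.equivFun.symm (LinearMap.toMatrix b b T *ᵥ z) := by
    rw [LinearEquiv.eq_symm_apply, Module.Basis.equivFun_apply, ← ContinuousLinearMap.coe_coe,
      ← LinearMap.toMatrix_mulVec_repr b b, ← Module.Basis.equivFun_apply,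
      LinearEquiv.apply_symm_apply]
  rw [← LinearMap.det_toMatrix b]
  refine (LinearMap.toMatrix b b T).det_eq_one_or_eq_neg_one_of_normSq_eq_one fun μ hμ => ?_
  obtain ⟨x, y, hxy, hx, hy⟩ :=
    (LinearMap.toMatrix b b T).exists_mulVec_eq_rotation_of_isRoot_charpoly
      (Polynomial.isRoot_of_mem_roots hμ)
  rw [Complex.normSq_apply, ← sq, ← sq]
  refine hT.sq_add_sq_eq_one (x := b.equivFun.symm x) (y := b.equivFun.symm y)
    (by simpa only [LinearEquiv.map_ne_zero_iff]) ?_ ?_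
  · rw [hT_coord, hx, map_sub, map_smul, map_smul]
  · rw [hT_coord, hy, map_add, map_smul, map_smul]

theorem stmt12_general (n m : ℕ)
    (T : EuclideanSpace ℝ (Fin n) →L[ℝ] EuclideanSpace ℝ (Fin n))
    (hT : IsMIsometryR m T) :
    LinearMap.det ((T : EuclideanSpace ℝ (Fin n) →L[ℝ] EuclideanSpace ℝ (Fin n)) :
      EuclideanSpace ℝ (Fin n) →ₗ[ℝ] EuclideanSpace ℝ (Fin n)) = 1 ∨
    LinearMap.det ((T : EuclideanSpace ℝ (Fin n) →L[ℝ] EuclideanSpace ℝ (Fin n)) :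
      EuclideanSpace ℝ (Fin n) →ₗ[ℝ] EuclideanSpace ℝ (Fin n)) = -1 :=
  hT.det_eq_one_or_eq_neg_one

theorem stmt12 (n m : ℕ) (hm : Odd m)
    (T : EuclideanSpace ℝ (Fin n) →L[ℝ] EuclideanSpace ℝ (Fin n))
    (hT : IsMIsometryR m T) :
    LinearMap.det ((T : EuclideanSpace ℝ (Fin n) →L[ℝ] EuclideanSpace ℝ (Fin n)) :
      EuclideanSpace ℝ (Fin n) →ₗ[ℝ] EuclideanSpace ℝ (Fin n)) = 1 ∨
    LinearMap.det ((T : EuclideanSpace ℝ (Fin n) →L[ℝ] EuclideanSpace ℝ (Fin n)) :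
      EuclideanSpace ℝ (Fin n) →ₗ[ℝ] EuclideanSpace ℝ (Fin n)) = -1 :=
  stmt12_general n m T hT
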